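/- Let n ≥ 2 and let Z_n be the zigzag poset on elements a_1, …, a_n. Let w : C(Z_n) → C(Z_n) be any composition of chain polytope toggles τ_{a_j} in which τ_{a_1} appears exactly once, τ_{a_2} appears at most once, and the other toggles may appear any number of times (possibly zero). Then for every g ∈ C(Z_n), the Cesàro averages (1/N) Σ_{i=0}^{N−1} ( 2·(w^i(g))(a_1) + (w^i(g))(a_2) ) converge to 1 as N → ∞; i.e., the statistic g ↦ 2g(a_1) + g(a_2) is 1-mesic under the action of w on C(Z_n). Symmetrically, if τ_{a_n} appears exactly once and τ_{a_{n−1}} at most once in w, then the statistic g ↦ g(a_{n−1}) + 2g(a_n) is 1-mesic under w. -/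

import Mathlib

open scoped Classical

variable {P : Type*} [PartialOrder P]

/-- Membership in the chain polytope `C(P)`: nonnegative labels whose sum along every
chain is at most 1. -/
def InChainPolytope (P : Type*) [PartialOrder P] (g : P → ℝ) : Prop :=
  (∀ x : P, 0 ≤ g x) ∧ ∀ l : List P, l.Chain' (· < ·) → (l.map g).sum ≤ 1

/-- Membership in the order-reversing polytope `OR(P)`. -/
def InORPolytope (P : Type*) [PartialOrder P] (f : P → ℝ) : Prop :=
  (∀ x : P, 0 ≤ f x ∧ f x ≤ 1) ∧ ∀ ⦃x y : P⦄, x ≤ y → f y ≤ f x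

/-- Membership in the order-preserving polytope `OP(P)`. -/
def InOPPolytope (P : Type*) [PartialOrder P] (f : P → ℝ) : Prop :=
  (∀ x : P, 0 ≤ f x ∧ f x ≤ 1) ∧ ∀ ⦃x y : P⦄, x ≤ y → f x ≤ f y

/-- The poset `P̂`, obtained from `P` by adjoining a minimum `m̂ = ⊥` and a
maximum `M̂ = ⊤`. -/
abbrev PHat (P : Type*) := WithBot (WithTop P)

/-- The inclusion of `P` into `P̂`. -/
def toHat (x : P) : PHat P := ((x : WithTop P) : PHat P)

/-- Extension of an order-reversing labeling to `P̂`, with `f(m̂) = 1`, `f(M̂) = 0`. -/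
noncomputable def hatOR (f : P → ℝ) : PHat P → ℝ := fun y =>
  WithBot.recBotCoe 1 (fun w => WithTop.recTopCoe 0 f w) y

/-- Extension of an order-preserving labeling to `P̂`, with `f(m̂) = 0`, `f(M̂) = 1`. -/
noncomputable def hatOP (f : P → ℝ) : PHat P → ℝ := fun y =>
  WithBot.recBotCoe 0 (fun w => WithTop.recTopCoe 1 f w) y

/-- The saturated chains `x = y_1 ⋖ y_2 ⋖ ⋯ ⋖ y_k` from `x` up to a maximal element. -/
def maxChainsFrom (x : P) : Set (List P) :=
  {l | l.Chain' (· ⋖ ·) ∧ l.head? = some x ∧ ∃ z, l.getLast? = some z ∧ IsMax z}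

/-- The saturated chains `y_1 ⋖ ⋯ ⋖ y_k = x` from a minimal element up to `x`. -/
def maxChainsTo (x : P) : Set (List P) :=
  {l | l.Chain' (· ⋖ ·) ∧ (∃ a, l.head? = some a ∧ IsMin a) ∧ l.getLast? = some x}

/-- The maximal chains of `P` containing `e`. -/
def maxChainsThru (e : P) : Set (List P) :=
  {l | l.Chain' (· ⋖ ·) ∧ (∃ a, l.head? = some a ∧ IsMin a) ∧
    (∃ z, l.getLast? = some z ∧ IsMax z) ∧ e ∈ l}

/-- The transfer map `OR : C(P) → OR(P)`:
`(OR g)(x) = max{ g(y_1) + ⋯ + g(y_k) | x = y_1 ⋖ ⋯ ⋖ y_k, y_k maximal }`. -/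
noncomputable def ORmap (g : P → ℝ) (x : P) : ℝ :=
  sSup ((fun l => (l.map g).sum) '' maxChainsFrom x)

/-- The transfer map `OP : C(P) → OP(P)`:
`(OP g)(x) = max{ g(y_1) + ⋯ + g(y_k) | y_1 ⋖ ⋯ ⋖ y_k = x, y_1 minimal }`. -/
noncomputable def OPmap (g : P → ℝ) (x : P) : ℝ :=
  sSup ((fun l => (l.map g).sum) '' maxChainsTo x)

/-- The inverse transfer map: `(OR⁻¹ f)(x) = f(x) - max{ f(y) | y ⋗ x in P̂ }`. -/
noncomputable def ORinv (f : P → ℝ) (x : P) : ℝ :=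
  f x - sSup {v : ℝ | ∃ y : PHat P, toHat x ⋖ y ∧ v = hatOR f y}

/-- The inverse transfer map: `(OP⁻¹ f)(x) = f(x) - max{ f(y) | y ⋖ x in P̂ }`. -/
noncomputable def OPinv (f : P → ℝ) (x : P) : ℝ :=
  f x - sSup {v : ℝ | ∃ y : PHat P, y ⋖ toHat x ∧ v = hatOP f y}

/-- The piecewise-linear order ideal toggle on the order-reversing polytope:
the label of `e` is replaced by
`max{f(y) | y ⋗ e in P̂} + min{f(y) | y ⋖ e in P̂} - f(e)`. -/
noncomputable def tPL (e : P) (f : P → ℝ) : P → ℝ :=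
  Function.update f e
    (sSup {v : ℝ | ∃ y : PHat P, toHat e ⋖ y ∧ v = hatOR f y}
      + sInf {v : ℝ | ∃ y : PHat P, y ⋖ toHat e ∧ v = hatOR f y} - f e)

/-- The piecewise-linear antichain (chain polytope) toggle: the label of `e` is replaced
by `1 - max{ Σ g(y_i) | (y_1,…,y_k) a maximal chain of P containing e }`. -/
noncomputable def tauPL (e : P) (g : P → ℝ) : P → ℝ :=
  Function.update g e (1 - sSup ((fun l => (l.map g).sum) '' maxChainsThru e))

/-- The indicator function of a subset. -/
noncomputable def ind (S : Set P) : P → ℝ := fun x => if x ∈ S then 1 else 0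

def listComp {α : Type*} (fs : List (α → α)) : α → α := fs.foldr (· ∘ ·) id

/-- The zigzag (fence) poset `Z_n` on elements `a_1, …, a_n` (here indexed by
`Fin n`, with `a_j` corresponding to `j - 1`), with order relations generated by
`a_{2i-1} < a_{2i}` and `a_{2i+1} < a_{2i}`. -/
structure Zigzag (n : ℕ) where
  val : Fin n
deriving DecidableEq

instance {n : ℕ} : PartialOrder (Zigzag n) where
  le x y := x = y ∨ ((y.val : ℕ) % 2 = 1 ∧
    ((x.val : ℕ) + 1 = (y.val : ℕ) ∨ (x.val : ℕ) = (y.val : ℕ) + 1))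
  le_refl x := Or.inl rfl
  le_trans x y z hxy hyz := by
    rcases hxy with rfl | hxy
    · exact hyz
    · rcases hyz with rfl | hyz
      · exact Or.inr hxy
      · exfalso; omega
  le_antisymm x y hxy hyx := by
    rcases hxy with rfl | hxy
    · rfl
    · rcases hyx with rfl | hyx
      · rfl
      · exfalso; omega

/-!
In a poset of height one the maximal chains through `e` are the two-element chains containing
`e`, so `τ_e` preserves `C(P)`, and if `k` is the only element comparable to `j`, then `τ_j`
resets the label of `j` to `1 - g(j) - g(k)`. Write `w = u ∘ τ_j ∘ v` with `τ_j` occurring in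
neither `u` nor `v`. If `τ_k` occurs in `v`, then `(w g)(j) + (w g)(k) = 1 - g(j)`; otherwise
`(w g)(j) = 1 - g(j) - g(k)`. Either way `2 g(j) + g(k) = 1 + H(g) - H(w g)` with `H` equal to
`g(j) + g(k)`, resp. `g(j)`, which is bounded on `C(P)`, and the Cesàro averages of a bounded
coboundary tend to `0`. The zigzag poset has height one, `a_2` is the only element comparable
to `a_1`, and `a_{n-1}` the only one comparable to `a_n`.
-/

open Filter Set Topology in
theorem tendsto_birkhoffAverage_of_eq_const_add_coboundary {α : Type*} {f : α → α}
    {s H : α → ℝ} {c : ℝ} {x : α} (hs : ∀ y, s y = c + (H y - H (f y)))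
    (hH : Bornology.IsBounded (range (H <| f^[·] x))) :
    Tendsto (birkhoffAverage ℝ f s · x) atTop (𝓝 c) := by
  have hsum (N : ℕ) : birkhoffSum f s N x = N * c + (H x - H (f^[N] x)) := by
    simp only [birkhoffSum, hs, Finset.sum_add_distrib, Finset.sum_const, Finset.card_range,
      nsmul_eq_mul, ← Function.iterate_succ_apply' f, Finset.sum_range_sub' (H <| f^[·] x),
      Function.iterate_zero_apply]
  have hdiff := (tendsto_birkhoffAverage_apply_sub_birkhoffAverage ℝ hH).const_sub c
  rw [sub_zero] at hdiff
  refine hdiff.congr' ?_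
  filter_upwards [eventually_ne_atTop 0] with N hN
  rw [birkhoffAverage_apply_sub_birkhoffAverage, birkhoffAverage, hsum, smul_eq_mul, smul_eq_mul]
  field_simp
  ring

theorem listComp_append {α : Type*} (fs gs : List (α → α)) :
    listComp (fs ++ gs) = listComp fs ∘ listComp gs := by
  induction fs with
  | nil => rfl
  | cons f fs ih => simp only [listComp, List.cons_append, List.foldr_cons] at ih ⊢; rw [ih]; rfl

theorem tauPL_apply_of_ne {e x : P} (hx : x ≠ e) (g : P → ℝ) : tauPL e g x = g x :=
  Function.update_of_ne hx _ _

theorem listComp_map_tauPL_apply_of_not_mem {x : P} {ws : List P} (hx : x ∉ ws) (g : P → ℝ) :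
    listComp (ws.map tauPL) g x = g x := by
  induction ws with
  | nil => rfl
  | cons e ws ih =>
    rw [List.mem_cons, not_or] at hx
    exact (tauPL_apply_of_ne hx.1 _).trans (ih hx.2)

theorem InChainPolytope.le_one {g : P → ℝ} (hg : InChainPolytope P g) (x : P) : g x ≤ 1 := by
  simpa using hg.2 [x] (List.isChain_singleton x)

def HeightLEOne (P : Type*) [PartialOrder P] : Prop := ∀ ⦃x y z : P⦄, x < y → ¬y < z

namespace HeightLEOne

theorem covBy_iff (hP : HeightLEOne P) {x y : P} : x ⋖ y ↔ x < y :=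
  ⟨CovBy.lt, fun h => ⟨h, fun _ hxz hzy => hP hxz hzy⟩⟩

theorem isMin_of_lt (hP : HeightLEOne P) {x y : P} (h : x < y) : IsMin x :=
  fun _ hz => (hz.lt_or_eq.resolve_left fun hzx => hP hzx h).ge

theorem isMax_of_lt (hP : HeightLEOne P) {x y : P} (h : x < y) : IsMax y :=
  fun _ hz => (hz.lt_or_eq.resolve_left fun hyz => hP h hyz).ge

theorem isChain_lt_cases (hP : HeightLEOne P) {l : List P} (hl : l.IsChain (· < ·)) :
    l = [] ∨ (∃ x, l = [x]) ∨ ∃ x y, x < y ∧ l = [x, y] := by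
  match l, hl with
  | [], _ => exact Or.inl rfl
  | [x], _ => exact Or.inr (Or.inl ⟨x, rfl⟩)
  | [x, y], hl => exact Or.inr (Or.inr ⟨x, y, List.isChain_pair.mp hl, rfl⟩)
  | _ :: _ :: _ :: _, hl =>
    rw [List.isChain_cons_cons, List.isChain_cons_cons] at hl
    exact (hP hl.1 hl.2.1).elim

theorem pair_mem_maxChainsThru (hP : HeightLEOne P) {e x y : P} (hxy : x < y)
    (he : e = x ∨ e = y) : [x, y] ∈ maxChainsThru e :=
  ⟨List.isChain_pair.mpr (hP.covBy_iff.mpr hxy), ⟨x, rfl, hP.isMin_of_lt hxy⟩,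
    ⟨y, rfl, hP.isMax_of_lt hxy⟩, by rcases he with rfl | rfl <;> simp⟩

theorem tauPL_mem (hP : HeightLEOne P) {g : P → ℝ} (hg : InChainPolytope P g) (e : P) :
    InChainPolytope P (tauPL e g) := by
  set S := (fun l => (l.map g).sum) '' maxChainsThru e
  have hS_le : ∀ s ∈ S, s ≤ 1 := by
    rintro _ ⟨l, hl, rfl⟩
    exact hg.2 l (hl.1.imp fun _ _ h => h.lt)
  have hS_nonneg : ∀ s ∈ S, 0 ≤ s := by
    rintro _ ⟨l, -, rfl⟩
    exact List.sum_nonneg (by simpa using fun x _ => hg.1 x)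
  have hpair {x y : P} (hxy : x < y) (he : e = x ∨ e = y) : g x + g y ≤ sSup S :=
    le_csSup ⟨1, hS_le⟩ ⟨_, hP.pair_mem_maxChainsThru hxy he, by simp⟩
  have hself : tauPL e g e = 1 - sSup S := Function.update_self ..
  have hsup_le : sSup S ≤ 1 := Real.sSup_le hS_le zero_le_one
  have hsup_nonneg : 0 ≤ sSup S := Real.sSup_nonneg hS_nonneg
  refine ⟨fun x => ?_, fun l hl => ?_⟩
  · obtain rfl | hx := eq_or_ne x e
    · linarith
    · rw [tauPL_apply_of_ne hx]; exact hg.1 x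
  rcases hP.isChain_lt_cases hl with rfl | ⟨x, rfl⟩ | ⟨x, y, hxy, rfl⟩
  · simp
  · obtain rfl | hx := eq_or_ne x e
    · simp [hself, hsup_nonneg]
    · simpa [tauPL_apply_of_ne hx] using hg.le_one x
  · simp only [List.map_cons, List.map_nil, List.sum_cons, List.sum_nil, add_zero]
    obtain rfl | hx := eq_or_ne x e
    · rw [hself, tauPL_apply_of_ne hxy.ne']
      linarith [hpair hxy (Or.inl rfl), hg.1 x]
    obtain rfl | hy := eq_or_ne y e
    · rw [hself, tauPL_apply_of_ne hx]
      linarith [hpair hxy (Or.inr rfl), hg.1 y]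
    rw [tauPL_apply_of_ne hx, tauPL_apply_of_ne hy]
    simpa using hg.2 [x, y] (List.isChain_pair.mpr hxy)

theorem tauPL_apply_self_of_comparable_eq_singleton (hP : HeightLEOne P) {j k : P}
    (hjk : {x | j < x ∨ x < j} = {k}) (g : P → ℝ) : tauPL j g j = 1 - (g j + g k) := by
  obtain ⟨hk, huniq⟩ := Set.eq_singleton_iff_unique_mem.mp hjk
  have hS : (fun l => (l.map g).sum) '' maxChainsThru j = {g j + g k} := by
    refine Set.eq_singleton_iff_unique_mem.mpr ⟨?_, ?_⟩
    · rcases hk with h | h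
      · exact ⟨[j, k], hP.pair_mem_maxChainsThru h (Or.inl rfl), by simp⟩
      · exact ⟨[k, j], hP.pair_mem_maxChainsThru h (Or.inr rfl), by simp [add_comm]⟩
    rintro _ ⟨l, ⟨hch, ⟨a, ha, hamin⟩, ⟨z, hz, hzmax⟩, hjl⟩, rfl⟩
    rcases hP.isChain_lt_cases (hch.imp fun _ _ h => h.lt) with
      rfl | ⟨x, rfl⟩ | ⟨x, y, hxy, rfl⟩
    · simp at hjl
    · simp only [List.head?_cons, List.getLast?_singleton, Option.some.injEq,
        List.mem_singleton] at ha hz hjl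
      subst ha hz hjl
      exact hk.elim (fun h => (h.not_isMax hzmax).elim) fun h => (h.not_isMin hamin).elim
    · rcases List.mem_pair.mp hjl with rfl | rfl
      · simp [huniq y (Or.inl hxy)]
      · simp [huniq x (Or.inr hxy), add_comm]
  simp [tauPL, hS]

theorem listComp_map_tauPL_mem (hP : HeightLEOne P) (ws : List P) {g : P → ℝ}
    (hg : InChainPolytope P g) : InChainPolytope P (listComp (ws.map tauPL) g) := by
  induction ws with
  | nil => exact hg
  | cons e ws ih => exact hP.tauPL_mem ih e

end HeightLEOne

theorem exists_coboundary_of_tauPL_apply_self [DecidableEq P] {j k : P} (hjk : j ≠ k)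
    (htauj : ∀ g : P → ℝ, tauPL j g j = 1 - (g j + g k)) {ws : List P}
    (hj_count : ws.count j = 1) (hk_count : ws.count k ≤ 1) :
    ∃ H : (P → ℝ) → ℝ, (H = (· j) ∨ H = fun g => g j + g k) ∧
      ∀ g, 2 * g j + g k = 1 + (H g - H (listComp (ws.map tauPL) g)) := by
  obtain ⟨u, v, rfl⟩ := List.append_of_mem (List.count_pos_iff.mp (by omega : 0 < ws.count j))
  rw [List.count_append, List.count_cons_self] at hj_count
  rw [List.count_append, List.count_cons_of_ne hjk] at hk_count
  have hju : j ∉ u := List.count_eq_zero.mp (by omega)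
  have hjv : j ∉ v := List.count_eq_zero.mp (by omega)
  have hw (g : P → ℝ) : listComp ((u ++ j :: v).map tauPL) g =
      listComp (u.map tauPL) (tauPL j (listComp (v.map tauPL) g)) := by
    simp only [List.map_append, List.map_cons, listComp_append]; rfl
  have hwj (g : P → ℝ) :
      listComp ((u ++ j :: v).map tauPL) g j = 1 - (g j + listComp (v.map tauPL) g k) := by
    rw [hw, listComp_map_tauPL_apply_of_not_mem hju, htauj, listComp_map_tauPL_apply_of_not_mem hjv]
  by_cases hkv : k ∈ v
  · have hku : k ∉ u := fun hku => by
      have := List.count_pos_iff.mpr hku; have := List.count_pos_iff.mpr hkv; omega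
    refine ⟨fun g => g j + g k, Or.inr rfl, fun g => ?_⟩
    have hwk : listComp ((u ++ j :: v).map tauPL) g k = listComp (v.map tauPL) g k := by
      rw [hw, listComp_map_tauPL_apply_of_not_mem hku]
      exact tauPL_apply_of_ne hjk.symm _
    simp only [hwj, hwk]
    ring
  · refine ⟨(· j), Or.inl rfl, fun g => ?_⟩
    simp only [hwj, listComp_map_tauPL_apply_of_not_mem hkv]
    ring

open Filter Set Topology in
theorem HeightLEOne.tendsto_average_two_mul_add [DecidableEq P] (hP : HeightLEOne P) {j k : P}
    (hjk : {x | j < x ∨ x < j} = {k}) {ws : List P} (hj : ws.count j = 1)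
    (hk : ws.count k ≤ 1) {g : P → ℝ} (hg : InChainPolytope P g) :
    Tendsto (fun N : ℕ => (∑ i ∈ Finset.range N,
        (2 * ((listComp (ws.map tauPL))^[i] g) j + ((listComp (ws.map tauPL))^[i] g) k))
          / (N : ℝ)) atTop (𝓝 1) := by
  have hne : j ≠ k := by
    rintro rfl
    simpa using (Set.eq_singleton_iff_unique_mem.mp hjk).1
  obtain ⟨H, hH, hcob⟩ := exists_coboundary_of_tauPL_apply_self hne
    (hP.tauPL_apply_self_of_comparable_eq_singleton hjk) hj hk
  have hmaps : MapsTo (listComp (ws.map tauPL)) {g | InChainPolytope P g}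
      {g | InChainPolytope P g} := fun _ => hP.listComp_map_tauPL_mem ws
  have horbit (i : ℕ) : InChainPolytope P ((listComp (ws.map tauPL))^[i] g) :=
    hmaps.iterate i hg
  have hbdd : Bornology.IsBounded (range (H <| (listComp (ws.map tauPL))^[·] g)) := by
    refine isBounded_iff_forall_norm_le.mpr ⟨2, ?_⟩
    rintro _ ⟨i, rfl⟩
    have := horbit i
    rcases hH with rfl | rfl <;> simp only [Real.norm_eq_abs, abs_le] <;>
      constructor <;> linarith [this.1 j, this.1 k, this.le_one j, this.le_one k]
  simpa [birkhoffAverage, birkhoffSum, div_eq_inv_mul] using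
    tendsto_birkhoffAverage_of_eq_const_add_coboundary (s := fun g => 2 * g j + g k) hcob hbdd

namespace Zigzag

variable {n : ℕ}

theorem ext {x y : Zigzag n} (h : (x.val : ℕ) = y.val) : x = y := by
  cases x; cases y; congr; exact Fin.ext h

theorem lt_iff {x y : Zigzag n} :
    x < y ↔ (y.val : ℕ) % 2 = 1 ∧ ((x.val : ℕ) + 1 = y.val ∨ (x.val : ℕ) = y.val + 1) := by
  refine ⟨fun h => (h.le.resolve_left h.ne), fun h => lt_of_le_of_ne (Or.inr h) ?_⟩
  rintro rfl
  omega

theorem lt_or_gt_iff {x y : Zigzag n} :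
    x < y ∨ y < x ↔ (x.val : ℕ) + 1 = y.val ∨ (y.val : ℕ) + 1 = x.val := by
  simp only [lt_iff]
  omega

theorem heightLEOne : HeightLEOne (Zigzag n) := fun x y z hxy hyz => by
  rw [lt_iff] at hxy hyz
  omega

theorem setOf_comparable_first (hn : 1 < n) :
    {x : Zigzag n | ⟨⟨0, by omega⟩⟩ < x ∨ x < ⟨⟨0, by omega⟩⟩} = {⟨⟨1, hn⟩⟩} := by
  ext x
  simp only [Set.mem_ofPred_eq, Set.mem_singleton_iff, lt_or_gt_iff]
  exact ⟨fun h => ext (by dsimp only at h ⊢; omega), fun h => by subst h; simp⟩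

theorem setOf_comparable_last (hn : 1 < n) :
    {x : Zigzag n | ⟨⟨n - 1, by omega⟩⟩ < x ∨ x < ⟨⟨n - 1, by omega⟩⟩} =
      {⟨⟨n - 2, by omega⟩⟩} := by
  ext x
  simp only [Set.mem_ofPred_eq, Set.mem_singleton_iff, lt_or_gt_iff]
  exact ⟨fun h => ext (by dsimp only at h ⊢; omega), fun h => by subst h; dsimp only; omega⟩

end Zigzag

open Filter in
/-- Homomesy for chain polytope toggling on zigzag posets:  if `w` is a composition of
chain polytope toggles (given by the list `ws`, applied right to left) in which
`τ_{a_1}` appears exactly once and `τ_{a_2}` at most once, then the statistic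
`g ↦ 2g(a_1) + g(a_2)` is 1-mesic under `w` (its Cesàro averages along every forward
orbit converge to 1); symmetrically, if `τ_{a_n}` appears exactly once and `τ_{a_{n-1}}`
at most once in `w`, then `g ↦ g(a_{n-1}) + 2g(a_n)` is 1-mesic under `w`. -/
theorem zigzag_chain_polytope_homomesy (n : ℕ) (hn : 2 ≤ n) :
    (∀ ws : List (Zigzag n),
      ws.count ⟨⟨0, by omega⟩⟩ = 1 →
      ws.count ⟨⟨1, by omega⟩⟩ ≤ 1 →
      ∀ g : Zigzag n → ℝ, InChainPolytope (Zigzag n) g →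
        Tendsto (fun N : ℕ =>
            (∑ i ∈ Finset.range N,
              (2 * ((listComp (ws.map tauPL))^[i] g) ⟨⟨0, by omega⟩⟩
                + ((listComp (ws.map tauPL))^[i] g) ⟨⟨1, by omega⟩⟩)) / (N : ℝ))
          atTop (nhds 1)) ∧
    (∀ ws : List (Zigzag n),
      ws.count ⟨⟨n - 1, by omega⟩⟩ = 1 →
      ws.count ⟨⟨n - 2, by omega⟩⟩ ≤ 1 →
      ∀ g : Zigzag n → ℝ, InChainPolytope (Zigzag n) g →
        Tendsto (fun N : ℕ =>
            (∑ i ∈ Finset.range N,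
              (((listComp (ws.map tauPL))^[i] g) ⟨⟨n - 2, by omega⟩⟩
                + 2 * ((listComp (ws.map tauPL))^[i] g) ⟨⟨n - 1, by omega⟩⟩)) / (N : ℝ))
          atTop (nhds 1)) := by
  refine ⟨fun ws h0 h1 g hg => ?_, fun ws h0 h1 g hg => ?_⟩
  · exact Zigzag.heightLEOne.tendsto_average_two_mul_add
      (Zigzag.setOf_comparable_first hn) h0 h1 hg
  · simpa only [add_comm] using
      Zigzag.heightLEOne.tendsto_average_two_mul_add (Zigzag.setOf_comparable_last hn) h0 h1 hg
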